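/- Let J be a real d×M matrix, W ⊆ ℝ^M a nonempty convex set, β > 0, w, u ∈ W, and B ≥ 0. Let G̃ : Ω → ℝ^{M×M} be an integrable random matrix with E[G̃] = Jᵀ J and E‖G̃ w‖² ≤ B. Let w⁺ : Ω → W be a random vector such that almost surely w⁺ satisfies the variational characterization of the Euclidean projection of w − β·G̃ w onto W, i.e., ⟨(w − β·G̃ w) − w⁺, v − w⁺⟩ ≤ 0 for all v ∈ W. Then ⟨J(w − u), J w⟩ ≤ (‖w − u‖² − E‖w⁺ − u‖²)/(2β) + (β/2)·B. -/

import Mathlib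

/-!
Testing the projection inequality at `v = u` shows that projecting onto `W` does not increase
the distance to `u`, so pointwise
`‖w⁺ - u‖² ≤ ‖w - β G̃ w - u‖² = ‖w - u‖² - 2β⟨G̃ w, w - u⟩ + β²‖G̃ w‖²`.
Taking expectations, the cross term becomes `⟨Jᵀ J w, w - u⟩ = ⟨J(w - u), J w⟩` by unbiasedness,
and rearranging gives the bound.
-/

open MeasureTheory
open scoped BigOperators Matrix

/-- Euclidean norm of a vector in `ℝ^n`. -/
noncomputable def eNorm {n : ℕ} (v : Fin n → ℝ) : ℝ :=
  Real.sqrt (∑ i, v i ^ 2)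

/-- Euclidean inner product of two vectors in `ℝ^n`. -/
def eInner {n : ℕ} (v u : Fin n → ℝ) : ℝ :=
  ∑ i, v i * u i

open scoped RealInnerProductSpace

section InnerProductSpace

variable {E : Type*} [NormedAddCommGroup E] [InnerProductSpace ℝ E]

lemma sq_norm_sub_le_of_inner_sub_nonpos {a p u : E} (h : ⟪a - p, u - p⟫ ≤ 0) :
    ‖p - u‖ ^ 2 ≤ ‖a - u‖ ^ 2 := by
  have hsplit : a - u = (a - p) - (u - p) := by abel
  rw [hsplit, norm_sub_sq_real (a - p), norm_sub_rev u p]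
  nlinarith [sq_nonneg ‖a - p‖]

lemma sq_norm_sub_le_of_inner_gradientStep_sub_nonpos {w g p u : E} {β : ℝ}
    (h : ⟪(w - β • g) - p, u - p⟫ ≤ 0) :
    ‖p - u‖ ^ 2 ≤ ‖w - u‖ ^ 2 - 2 * β * ⟪g, w - u⟫ + β ^ 2 * ‖g‖ ^ 2 := by
  have hstep : w - β • g - u = (w - u) - β • g := by abel
  calc ‖p - u‖ ^ 2 ≤ ‖(w - u) - β • g‖ ^ 2 := hstep ▸ sq_norm_sub_le_of_inner_sub_nonpos h
    _ = ‖w - u‖ ^ 2 - 2 * β * ⟪g, w - u⟫ + β ^ 2 * ‖g‖ ^ 2 := by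
      rw [norm_sub_sq_real, inner_smul_right, real_inner_comm, norm_smul, Real.norm_eq_abs,
        mul_pow, sq_abs]
      ring

end InnerProductSpace

lemma eInner_eq_inner {n : ℕ} (v u : Fin n → ℝ) :
    eInner v u = ⟪WithLp.toLp 2 v, WithLp.toLp 2 u⟫ := by
  simp [eInner, EuclideanSpace.inner_toLp_toLp, dotProduct, mul_comm]

lemma eNorm_eq_norm {n : ℕ} (v : Fin n → ℝ) : eNorm v = ‖WithLp.toLp 2 v‖ := by
  simp [eNorm, EuclideanSpace.norm_eq]

lemma eNorm_sub_sq_le_of_eInner_gradientStep_sub_nonpos {n : ℕ} {w g p u : Fin n → ℝ} {β : ℝ}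
    (h : eInner ((w - β • g) - p) (u - p) ≤ 0) :
    eNorm (p - u) ^ 2 ≤ eNorm (w - u) ^ 2 - 2 * β * eInner g (w - u) + β ^ 2 * eNorm g ^ 2 := by
  simp only [eNorm_eq_norm, eInner_eq_inner, WithLp.toLp_sub, WithLp.toLp_smul] at h ⊢
  exact sq_norm_sub_le_of_inner_gradientStep_sub_nonpos h

lemma transpose_mul_self_mulVec_dotProduct {m n : Type*} [Fintype m] [Fintype n]
    (A : Matrix m n ℝ) (x y : n → ℝ) : (Aᵀ * A) *ᵥ x ⬝ᵥ y = A *ᵥ y ⬝ᵥ A *ᵥ x := by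
  rw [← Matrix.mulVec_mulVec, Matrix.mulVec_transpose, ← Matrix.dotProduct_mulVec,
    dotProduct_comm]

section RandomMatrix

variable {Ω m n : Type*} [Fintype m] [Fintype n] [MeasurableSpace Ω] {μ : Measure Ω}
  {G : Ω → Matrix m n ℝ}

lemma mulVec_dotProduct_eq_sum (G : Matrix m n ℝ) (x : n → ℝ) (y : m → ℝ) :
    G *ᵥ x ⬝ᵥ y = ∑ i, ∑ j, G i j * (x j * y i) := by
  simp only [Matrix.mulVec, dotProduct, Finset.sum_mul]
  exact Finset.sum_congr rfl fun i _ => Finset.sum_congr rfl fun j _ => by ring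

lemma integrable_mulVec_dotProduct (hG : ∀ i j, Integrable (fun ω => G ω i j) μ)
    (x : n → ℝ) (y : m → ℝ) : Integrable (fun ω => G ω *ᵥ x ⬝ᵥ y) μ := by
  simp only [mulVec_dotProduct_eq_sum]
  exact integrable_finsetSum _ fun i _ =>
    integrable_finsetSum _ fun j _ => (hG i j).mul_const _

lemma integral_mulVec_dotProduct (hG : ∀ i j, Integrable (fun ω => G ω i j) μ)
    {A : Matrix m n ℝ} (hA : ∀ i j, ∫ ω, G ω i j ∂μ = A i j) (x : n → ℝ) (y : m → ℝ) :
    ∫ ω, G ω *ᵥ x ⬝ᵥ y ∂μ = A *ᵥ x ⬝ᵥ y := by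
  simp only [mulVec_dotProduct_eq_sum]
  rw [integral_finsetSum _ fun i _ => integrable_finsetSum _ fun j _ => (hG i j).mul_const _]
  refine Finset.sum_congr rfl fun i _ => ?_
  rw [integral_finsetSum _ fun j _ => (hG i j).mul_const _]
  exact Finset.sum_congr rfl fun j _ => by rw [integral_mul_const, hA]

end RandomMatrix

/-- No integrability of `f` is needed: a non-integrable `f` has integral `0`, which lies below
the integral of its nonnegative upper bound. -/
lemma integral_le_sub_add_of_ae_le {Ω : Type*} [MeasurableSpace Ω] {μ : Measure Ω}
    [IsProbabilityMeasure μ] {f X Y : Ω → ℝ} {c a b : ℝ} (hf : 0 ≤ᵐ[μ] f)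
    (hX : Integrable X μ) (hY : Integrable Y μ) (h : ∀ᵐ ω ∂μ, f ω ≤ c - a * X ω + b * Y ω) :
    ∫ ω, f ω ∂μ ≤ c - a * ∫ ω, X ω ∂μ + b * ∫ ω, Y ω ∂μ := by
  have hlin : Integrable (fun ω => c - a * X ω) μ := (integrable_const c).sub (hX.const_mul a)
  have hbound : Integrable (fun ω => c - a * X ω + b * Y ω) μ := hlin.add (hY.const_mul b)
  refine (integral_mono_of_nonneg hf hbound h).trans_eq ?_
  rw [integral_add hlin (hY.const_mul b), integral_sub (integrable_const c) (hX.const_mul a),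
    integral_const, integral_const_mul, integral_const_mul]
  simp

theorem stmt13_general {Ω : Type*} [MeasurableSpace Ω] (μ : Measure Ω) [IsProbabilityMeasure μ]
    {d M : ℕ} (J : Matrix (Fin d) (Fin M) ℝ)
    (W : Set (Fin M → ℝ))
    {β : ℝ} (hβ : 0 < β) (w u : Fin M → ℝ) (hu : u ∈ W)
    {B : ℝ}
    (Gt : Ω → Matrix (Fin M) (Fin M) ℝ)
    (hGtInt : ∀ a b, Integrable (fun ω => Gt ω a b) μ)
    (hGtmean : ∀ a b, ∫ ω, Gt ω a b ∂μ = (Jᵀ * J) a b)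
    (hGtSqInt : Integrable (fun ω => eNorm ((Gt ω).mulVec w) ^ 2) μ)
    (hGtvar : ∫ ω, eNorm ((Gt ω).mulVec w) ^ 2 ∂μ ≤ B)
    (wplus : Ω → (Fin M → ℝ))
    (hproj : ∀ᵐ ω ∂μ, ∀ v ∈ W,
      eInner ((w - β • (Gt ω).mulVec w) - wplus ω) (v - wplus ω) ≤ 0) :
    eInner (J.mulVec (w - u)) (J.mulVec w) ≤
      (eNorm (w - u) ^ 2 - ∫ ω, eNorm (wplus ω - u) ^ 2 ∂μ) / (2 * β) + (β / 2) * B := by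
  have hstep : ∀ᵐ ω ∂μ, eNorm (wplus ω - u) ^ 2 ≤ eNorm (w - u) ^ 2
      - 2 * β * eInner (Gt ω *ᵥ w) (w - u) + β ^ 2 * eNorm (Gt ω *ᵥ w) ^ 2 := by
    filter_upwards [hproj] with ω hω
    exact eNorm_sub_sq_le_of_eInner_gradientStep_sub_nonpos (hω u hu)
  have hexp := integral_le_sub_add_of_ae_le (ae_of_all _ fun ω => by positivity)
    (integrable_mulVec_dotProduct hGtInt w (w - u)) hGtSqInt hstep
  have hmean : ∫ ω, Gt ω *ᵥ w ⬝ᵥ (w - u) ∂μ = eInner (J *ᵥ (w - u)) (J *ᵥ w) :=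
    (integral_mulVec_dotProduct hGtInt hGtmean w (w - u)).trans
      (transpose_mul_self_mulVec_dotProduct J w (w - u))
  rw [hmean] at hexp
  rw [div_add' _ _ _ (by positivity), le_div_iff₀ (by positivity)]
  nlinarith

/-- Let `J` be a real `d × M` matrix, `W ⊆ ℝ^M` a nonempty convex set,
`β > 0`, `w, u ∈ W`, `B ≥ 0`. Let `G̃` be an integrable random `M × M` matrix with
`E[G̃] = Jᵀ J` (entrywise) and `E‖G̃ w‖² ≤ B`, and let `w⁺` be a random point of `W` that
almost surely satisfies the variational characterization of the Euclidean projection of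
`w − β·G̃ w` onto `W`. Then
`⟨J(w − u), J w⟩ ≤ (‖w − u‖² − E‖w⁺ − u‖²)/(2β) + (β/2)·B`. -/
theorem stmt13 {Ω : Type*} [MeasurableSpace Ω] (μ : Measure Ω) [IsProbabilityMeasure μ]
    {d M : ℕ} (J : Matrix (Fin d) (Fin M) ℝ)
    (W : Set (Fin M → ℝ)) (hWne : W.Nonempty) (hWconv : Convex ℝ W)
    {β : ℝ} (hβ : 0 < β) (w u : Fin M → ℝ) (hw : w ∈ W) (hu : u ∈ W)
    {B : ℝ} (hB : 0 ≤ B)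
    (Gt : Ω → Matrix (Fin M) (Fin M) ℝ)
    (hGtInt : ∀ a b, Integrable (fun ω => Gt ω a b) μ)
    (hGtmean : ∀ a b, ∫ ω, Gt ω a b ∂μ = (Jᵀ * J) a b)
    (hGtSqInt : Integrable (fun ω => eNorm ((Gt ω).mulVec w) ^ 2) μ)
    (hGtvar : ∫ ω, eNorm ((Gt ω).mulVec w) ^ 2 ∂μ ≤ B)
    (wplus : Ω → (Fin M → ℝ)) (hwplusmeas : Measurable wplus)
    (hwplusW : ∀ ω, wplus ω ∈ W)
    (hproj : ∀ᵐ ω ∂μ, ∀ v ∈ W,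
      eInner ((w - β • (Gt ω).mulVec w) - wplus ω) (v - wplus ω) ≤ 0) :
    eInner (J.mulVec (w - u)) (J.mulVec w) ≤
      (eNorm (w - u) ^ 2 - ∫ ω, eNorm (wplus ω - u) ^ 2 ∂μ) / (2 * β) + (β / 2) * B :=
  stmt13_general μ J W hβ w u hu Gt hGtInt hGtmean hGtSqInt hGtvar wplus hproj
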